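/- arXiv:2101.10158 — 6 statements merged into one kernel-verified Lean document; each statement's English description precedes it below -/
import Mathlib

section
/- For real constants a < b, the function g ↦ log(Φ(b − g) − Φ(a − g)) is concave on ℝ, where Φ is the standard normal CDF. -/
/-- The standard normal cumulative distribution function. -/
noncomputable def stdNormalCDF (x : ℝ) : ℝ :=
  ∫ t in Set.Iic x, (Real.sqrt (2 * Real.pi))⁻¹ * Real.exp (-t ^ 2 / 2)

namespace StdNormalAux

/-- The standard normal density. -/
noncomputable def φ (t : ℝ) : ℝ := (Real.sqrt (2 * Real.pi))⁻¹ * Real.exp (-t ^ 2 / 2)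

lemma φ_pos (t : ℝ) : 0 < φ t := by
  have h : (0:ℝ) < 2 * Real.pi := by positivity
  exact mul_pos (inv_pos.2 (Real.sqrt_pos.2 h)) (Real.exp_pos _)

lemma continuous_φ : Continuous φ := by
  unfold φ
  exact continuous_const.mul (Real.continuous_exp.comp (by fun_prop))

lemma hasDerivAt_φ (t : ℝ) : HasDerivAt φ (-t * φ t) t := by
  have h1 : HasDerivAt (fun s : ℝ => -s ^ 2 / 2) (-t) t := by
    have := ((hasDerivAt_pow 2 t).neg).div_const 2
    refine this.congr_deriv ?_
    simp
    ring
  have h2 := (h1.exp).const_mul ((Real.sqrt (2 * Real.pi))⁻¹)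
  refine h2.congr_deriv ?_
  unfold φ
  ring

lemma integrable_φ : MeasureTheory.Integrable φ := by
  have h : MeasureTheory.Integrable (fun t : ℝ => Real.exp (-(1/2 : ℝ) * t ^ 2)) :=
    integrable_exp_neg_mul_sq (by norm_num)
  have h2 := h.const_mul ((Real.sqrt (2 * Real.pi))⁻¹)
  convert h2 using 2 with t
  unfold φ
  ring_nf

lemma cdf_sub (u v : ℝ) : stdNormalCDF v - stdNormalCDF u = ∫ t in u..v, φ t :=
  intervalIntegral.integral_Iic_sub_Iic integrable_φ.integrableOn integrable_φ.integrableOn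

lemma hasDerivAt_cdf (x : ℝ) : HasDerivAt stdNormalCDF (φ x) x := by
  have h : stdNormalCDF = fun y => stdNormalCDF 0 + ∫ t in (0:ℝ)..y, φ t := by
    funext y
    rw [← cdf_sub]
    ring
  rw [h]
  have hd : HasDerivAt (fun y => ∫ t in (0:ℝ)..y, φ t) (φ x) x :=
    intervalIntegral.integral_hasDerivAt_right integrable_φ.intervalIntegrable
      (continuous_φ.stronglyMeasurable.stronglyMeasurableAtFilter)
      continuous_φ.continuousAt
  exact hd.const_add _

/-- The key inequality: `(u φ(u) - v φ(v)) ∫_u^v φ ≤ (φ(u) - φ(v))^2`. -/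
lemma key {u v : ℝ} (huv : u ≤ v) :
    (u * φ u - v * φ v) * (∫ t in u..v, φ t) ≤ (φ u - φ v) ^ 2 := by
  set m := ∫ t in u..v, φ t with hm_def
  have hM1 : (∫ t in u..v, t * φ t) = φ u - φ v := by
    have hder : ∀ t ∈ Set.uIcc u v, HasDerivAt (fun s => -φ s) (t * φ t) t := by
      intro t _
      have := (hasDerivAt_φ t).neg
      refine this.congr_deriv ?_
      ring
    rw [intervalIntegral.integral_eq_sub_of_hasDerivAt hder
      ((continuous_id.mul continuous_φ).intervalIntegrable _ _)]
    ring
  have hlow : u * m ≤ φ u - φ v := by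
    rw [← hM1]
    have : (∫ t in u..v, u * φ t) ≤ ∫ t in u..v, t * φ t :=
      intervalIntegral.integral_mono_on huv
        ((continuous_const.mul continuous_φ).intervalIntegrable _ _)
        ((continuous_id.mul continuous_φ).intervalIntegrable _ _)
        (fun t ht => mul_le_mul_of_nonneg_right ht.1 (φ_pos t).le)
    calc u * m = ∫ t in u..v, u * φ t := by
          rw [hm_def, intervalIntegral.integral_const_mul]
      _ ≤ _ := this
  have hhigh : φ u - φ v ≤ v * m := by
    rw [← hM1]
    have : (∫ t in u..v, t * φ t) ≤ ∫ t in u..v, v * φ t :=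
      intervalIntegral.integral_mono_on huv
        ((continuous_id.mul continuous_φ).intervalIntegrable _ _)
        ((continuous_const.mul continuous_φ).intervalIntegrable _ _)
        (fun t ht => mul_le_mul_of_nonneg_right ht.2 (φ_pos t).le)
    calc (∫ t in u..v, t * φ t) ≤ ∫ t in u..v, v * φ t := this
      _ = v * m := by rw [hm_def, intervalIntegral.integral_const_mul]
  nlinarith [mul_le_mul_of_nonneg_left hlow (φ_pos u).le,
    mul_le_mul_of_nonneg_left hhigh (φ_pos v).le]

end StdNormalAux

/-- For real constants `a < b`, the function `g ↦ log (Φ (b - g) - Φ (a - g))` is concave on `ℝ`,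
where `Φ` is the standard normal CDF. -/
theorem concave_log_stdNormalCDF_diff (a b : ℝ) (hab : a < b) :
    ConcaveOn ℝ Set.univ
      (fun g : ℝ => Real.log (stdNormalCDF (b - g) - stdNormalCDF (a - g))) := by
  classical
  open StdNormalAux in
  set f : ℝ → ℝ := fun g => stdNormalCDF (b - g) - stdNormalCDF (a - g) with hf_def
  have hf_eq : ∀ g, f g = ∫ t in (a - g)..(b - g), StdNormalAux.φ t := fun g =>
    StdNormalAux.cdf_sub (a - g) (b - g)
  have hfpos : ∀ g, 0 < f g := by
    intro g
    rw [hf_eq g]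
    exact intervalIntegral.intervalIntegral_pos_of_pos (StdNormalAux.integrable_φ.intervalIntegrable)
      StdNormalAux.φ_pos (by linarith)
  have hf' : ∀ g, HasDerivAt f (StdNormalAux.φ (a - g) - StdNormalAux.φ (b - g)) g := by
    intro g
    have hb' : HasDerivAt (fun g : ℝ => b - g) (-1 : ℝ) g := (hasDerivAt_id g).const_sub b
    have ha' : HasDerivAt (fun g : ℝ => a - g) (-1 : ℝ) g := (hasDerivAt_id g).const_sub a
    have h1 := (StdNormalAux.hasDerivAt_cdf (b - g)).comp g hb'
    have h2 := (StdNormalAux.hasDerivAt_cdf (a - g)).comp g ha'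
    have := h1.sub h2
    refine this.congr_deriv ?_
    ring
  have hf'' : ∀ g, HasDerivAt (fun g => StdNormalAux.φ (a - g) - StdNormalAux.φ (b - g))
      ((a - g) * StdNormalAux.φ (a - g) - (b - g) * StdNormalAux.φ (b - g)) g := by
    intro g
    have hb' : HasDerivAt (fun g : ℝ => b - g) (-1 : ℝ) g := (hasDerivAt_id g).const_sub b
    have ha' : HasDerivAt (fun g : ℝ => a - g) (-1 : ℝ) g := (hasDerivAt_id g).const_sub a
    have h1 := (StdNormalAux.hasDerivAt_φ (a - g)).comp g ha'
    have h2 := (StdNormalAux.hasDerivAt_φ (b - g)).comp g hb'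
    have := h1.sub h2
    refine this.congr_deriv ?_
    ring
  set F : ℝ → ℝ := fun g => Real.log (f g) with hF_def
  have hF' : ∀ g, HasDerivAt F
      ((StdNormalAux.φ (a - g) - StdNormalAux.φ (b - g)) / f g) g := fun g =>
    (hf' g).log (hfpos g).ne'
  set D : ℝ → ℝ := fun g => (StdNormalAux.φ (a - g) - StdNormalAux.φ (b - g)) / f g with hD_def
  have hderivF : deriv F = D := funext fun g => (hF' g).deriv
  have hD' : ∀ g, HasDerivAt D
      ((((a - g) * StdNormalAux.φ (a - g) - (b - g) * StdNormalAux.φ (b - g)) * f g -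
        (StdNormalAux.φ (a - g) - StdNormalAux.φ (b - g)) *
          (StdNormalAux.φ (a - g) - StdNormalAux.φ (b - g))) / f g ^ 2) g := fun g =>
    (hf'' g).div (hf' g) (hfpos g).ne'
  have key : ∀ g, (((a - g) * StdNormalAux.φ (a - g) - (b - g) * StdNormalAux.φ (b - g)) * f g -
      (StdNormalAux.φ (a - g) - StdNormalAux.φ (b - g)) *
        (StdNormalAux.φ (a - g) - StdNormalAux.φ (b - g))) / f g ^ 2 ≤ 0 := by
    intro g
    apply div_nonpos_of_nonpos_of_nonneg _ (sq_nonneg _)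
    have hk := StdNormalAux.key (u := a - g) (v := b - g) (by linarith)
    rw [← hf_eq g] at hk
    nlinarith [hk]
  have hmain : ConcaveOn ℝ Set.univ F := by
    apply concaveOn_of_deriv2_nonpos convex_univ
    · exact fun g _ => ((hF' g).continuousAt).continuousWithinAt
    · intro g _
      exact ((hF' g).differentiableAt).differentiableWithinAt
    · intro g _
      rw [hderivF]
      exact ((hD' g).differentiableAt).differentiableWithinAt
    · intro g _
      have : deriv^[2] F g = deriv (deriv F) g := rfl
      rw [this, hderivF, (hD' g).deriv]
      exact key g
  exact hmain
end

section
/- For real constants a < b, the function g ↦ Φ(b − g) − Φ(a − g) is log-concave on ℝ; more generally, for any log-concave probability density f on ℝ, the function g ↦ ∫_a^b f(t − g) dt is log-concave in g. -/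
open MeasureTheory

theorem concaveOn_of_continuousOn_midpoint {S : Set ℝ} {h : ℝ → ℝ}
    (hS : Convex ℝ S) (hc : ContinuousOn h S)
    (hmid : ∀ x ∈ S, ∀ y ∈ S, (h x + h y) / 2 ≤ h ((x + y) / 2)) :
    ConcaveOn ℝ S h := by
  have key : ∀ x ∈ S, ∀ y ∈ S, x < y → ∀ w ∈ Set.Icc x y,
      h x + (w - x) * (h y - h x) / (y - x) ≤ h w := by
    intro x hx y hy hxy w hw
    have hIcc : Set.Icc x y ⊆ S := hS.ordConnected.out hx hy
    have hne : y - x ≠ 0 := by intro hc; exfalso; have := hxy; linarith [hc]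
    set ψ : ℝ → ℝ := fun t => h t - (h x + (t - x) * (h y - h x) / (y - x)) with hψ
    have hψx : ψ x = 0 := by simp [hψ]
    have hψy : ψ y = 0 := by simp only [hψ]; field_simp; ring
    have hψc : ContinuousOn ψ (Set.Icc x y) := by
      apply ContinuousOn.sub (hc.mono hIcc); fun_prop
    have hψmid : ∀ s ∈ Set.Icc x y, ∀ t ∈ Set.Icc x y,
        (ψ s + ψ t) / 2 ≤ ψ ((s + t) / 2) := by
      intro s hs t ht
      have h1 := hmid s (hIcc hs) t (hIcc ht)
      simp only [hψ]
      have e : (h x + ((s + t) / 2 - x) * (h y - h x) / (y - x))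
          = ((h x + (s - x) * (h y - h x) / (y - x))
            + (h x + (t - x) * (h y - h x) / (y - x))) / 2 := by
        field_simp; ring
      rw [e]; linarith
    clear_value ψ
    obtain ⟨t₀, ht₀, hmin⟩ := (isCompact_Icc (a := x) (b := y)).exists_isMinOn
      ⟨x, Set.left_mem_Icc.2 hxy.le⟩ hψc
    have hmin' : ∀ s ∈ Set.Icc x y, ψ t₀ ≤ ψ s := fun s hs => hmin hs
    suffices h0 : 0 ≤ ψ t₀ by
      have h2 : 0 ≤ ψ w := le_trans h0 (hmin' w hw)
      rw [hψ] at h2; simp only at h2; linarith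
    by_contra hneg
    push_neg at hneg
    set m := ψ t₀ with hm
    clear_value m
    set T : Set ℝ := Set.Icc x y ∩ ψ ⁻¹' {m} with hT
    have hTne : T.Nonempty := ⟨t₀, ht₀, hm.symm⟩
    have hTclosed : IsClosed T :=
      hψc.preimage_isClosed_of_isClosed isClosed_Icc isClosed_singleton
    have hTbdd : BddBelow T := ⟨x, fun t ht => ht.1.1⟩
    set t := sInf T with ht
    have htT : t ∈ T := hTclosed.csInf_mem hTne hTbdd
    have htIcc : t ∈ Set.Icc x y := htT.1
    have htval : ψ t = m := htT.2
    have htx : x < t := by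
      rcases lt_or_eq_of_le htIcc.1 with h1 | h1
      · exact h1
      · exfalso; rw [← h1] at htval; rw [hψx] at htval; linarith
    have hty : t < y := by
      rcases lt_or_eq_of_le htIcc.2 with h1 | h1
      · exact h1
      · exfalso; rw [h1] at htval; rw [hψy] at htval; linarith
    set δ := min (t - x) (y - t) with hδ
    have hδ1 : δ ≤ t - x := min_le_left _ _
    have hδ2 : δ ≤ y - t := min_le_right _ _
    have hδpos : 0 < δ := lt_min (by linarith) (by linarith)
    have hp : t - δ ∈ Set.Icc x y := ⟨by linarith, by linarith⟩
    have hq : t + δ ∈ Set.Icc x y := ⟨by linarith, by linarith⟩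
    have hmidt : (ψ (t - δ) + ψ (t + δ)) / 2 ≤ ψ t := by
      have h1 := hψmid _ hp _ hq
      have heq : ((t - δ) + (t + δ)) / 2 = t := by ring
      rwa [heq] at h1
    have hpm : m ≤ ψ (t - δ) := hm ▸ hmin' _ hp
    have hqm : m ≤ ψ (t + δ) := hm ▸ hmin' _ hq
    have hpe : ψ (t - δ) = m := by linarith
    have : t ≤ t - δ := csInf_le hTbdd ⟨hp, hpe⟩
    linarith
  refine ⟨hS, ?_⟩
  intro x hx y hy α β hα hβ hαβ
  have main : ∀ x ∈ S, ∀ y ∈ S, x < y → ∀ α β : ℝ, 0 ≤ α → 0 ≤ β → α + β = 1 →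
      α • h x + β • h y ≤ h (α • x + β • y) := by
    intro x hx y hy hlt α β hα hβ hαβ
    have e1 : β * x ≤ β * y := mul_le_mul_of_nonneg_left hlt.le hβ
    have e2 : α * x + β * x = x := by rw [← add_mul, hαβ, one_mul]
    have e3 : α * y + β * y = y := by rw [← add_mul, hαβ, one_mul]
    have e4 : α * x ≤ α * y := mul_le_mul_of_nonneg_left hlt.le hα
    have hw : α • x + β • y ∈ Set.Icc x y := by
      constructor
      · simp only [smul_eq_mul]; linarith
      · simp only [smul_eq_mul]; linarith
    have hk := key x hx y hy hlt _ hw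
    have harith : h x + ((α • x + β • y) - x) * (h y - h x) / (y - x)
        = α • h x + β • h y := by
      have hne : y - x ≠ 0 := by intro hc; linarith [hc, hlt]
      have hαe : α = 1 - β := by linarith
      simp only [smul_eq_mul, hαe]
      field_simp
      ring
    linarith [harith ▸ hk]
  rcases lt_trichotomy x y with hlt | heq | hgt
  · exact main x hx y hy hlt α β hα hβ hαβ
  · rw [heq]
    have h1 : α • y + β • y = y := by rw [← add_smul, hαβ, one_smul]
    have h2 : α • h y + β • h y = h y := by rw [← add_smul, hαβ, one_smul]
    rw [h1, h2]
  · have := main y hy x hx hgt β α hβ hα (by linarith)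
    have e1 : β • y + α • x = α • x + β • y := by ring
    have e2 : β • h y + α • h x = α • h x + β • h y := by ring
    rw [e1, e2] at this
    exact this


/-- pair swap lemma for log-concave nonnegative functions -/
theorem logconc_pair {f : ℝ → ℝ} (hf0 : ∀ x, 0 ≤ f x)
    (hconc : ConcaveOn ℝ {x | 0 < f x} (fun x => Real.log (f x)))
    {x₁ x₂ y₁ y₂ : ℝ} (h1 : x₁ ≤ y₁) (h2 : y₁ ≤ x₂) (h3 : x₁ ≤ y₂) (h4 : y₂ ≤ x₂)
    (hsum : x₁ + x₂ = y₁ + y₂) : f x₁ * f x₂ ≤ f y₁ * f y₂ := by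
  rcases eq_or_lt_of_le (hf0 x₁) with hx1 | hx1
  · rw [← hx1, zero_mul]; exact mul_nonneg (hf0 _) (hf0 _)
  rcases eq_or_lt_of_le (hf0 x₂) with hx2 | hx2
  · rw [← hx2, mul_zero]; exact mul_nonneg (hf0 _) (hf0 _)
  have hm1 : x₁ ∈ {x | 0 < f x} := hx1
  have hm2 : x₂ ∈ {x | 0 < f x} := hx2
  rcases eq_or_lt_of_le (h1.trans h2) with heq | hlt
  · have hy1 : y₁ = x₁ := le_antisymm (heq ▸ h2) h1
    have hy2 : y₂ = x₂ := by linarith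
    rw [hy1, hy2]
  set t : ℝ := (x₂ - y₁) / (x₂ - x₁) with htdef
  have hxne : x₂ - x₁ ≠ 0 := by intro hc; linarith [hc]
  have ht0 : 0 ≤ t := div_nonneg (by linarith) (by linarith)
  have ht1 : t ≤ 1 := by
    rw [div_le_one (by linarith)]; linarith
  have hcomb1 : t • x₁ + (1 - t) • x₂ = y₁ := by
    simp only [smul_eq_mul, htdef]; field_simp; ring
  have hcomb2 : (1 - t) • x₁ + t • x₂ = y₂ := by
    have : y₂ = x₁ + x₂ - y₁ := by linarith
    rw [this, ← hcomb1]; simp only [smul_eq_mul]; ring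
  have hA := hconc.2 hm1 hm2 ht0 (show (0:ℝ) ≤ 1 - t by linarith) (show t + (1 - t) = 1 by ring)
  have hB := hconc.2 hm1 hm2 (show (0:ℝ) ≤ 1 - t by linarith) ht0 (show (1 - t) + t = 1 by ring)
  rw [hcomb1] at hA
  rw [hcomb2] at hB
  have hy1pos : 0 < f y₁ := by
    have := hconc.1 hm1 hm2 ht0 (show (0:ℝ) ≤ 1 - t by linarith) (show t + (1 - t) = 1 by ring)
    rw [hcomb1] at this; exact this
  have hy2pos : 0 < f y₂ := by
    have := hconc.1 hm1 hm2 (show (0:ℝ) ≤ 1 - t by linarith) ht0 (show (1 - t) + t = 1 by ring)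
    rw [hcomb2] at this; exact this
  have hlog : Real.log (f x₁) + Real.log (f x₂)
      ≤ Real.log (f y₁) + Real.log (f y₂) := by
    simp only [smul_eq_mul] at hA hB
    nlinarith [hA, hB]
  calc f x₁ * f x₂ = Real.exp (Real.log (f x₁) + Real.log (f x₂)) := by
        rw [Real.exp_add, Real.exp_log hx1, Real.exp_log hx2]
    _ ≤ Real.exp (Real.log (f y₁) + Real.log (f y₂)) := Real.exp_le_exp.2 hlog
    _ = f y₁ * f y₂ := by rw [Real.exp_add, Real.exp_log hy1pos, Real.exp_log hy2pos]

theorem logconc_slide (a b : ℝ) (hab : a < b) (f : ℝ → ℝ)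
    (hf0 : ∀ x, 0 ≤ f x) (hfm : Measurable f) (hfi : Integrable f)
    (hflogconc : ConcaveOn ℝ {x | 0 < f x} (fun x => Real.log (f x))) :
    ConcaveOn ℝ {g : ℝ | 0 < ∫ t in a..b, f (t - g)}
      (fun g : ℝ => Real.log (∫ t in a..b, f (t - g))) := by
  set χ : ℝ → ℝ := (Set.Ioc a b).indicator (fun _ => (1:ℝ)) with hχ
  have hχ0 : ∀ x, 0 ≤ χ x := by
    intro x; rw [hχ, Set.indicator_apply]; split_ifs <;> norm_num
  have hχ1 : ∀ x, χ x ≤ 1 := by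
    intro x; rw [hχ, Set.indicator_apply]; split_ifs <;> norm_num
  have hχm : Measurable χ := measurable_const.indicator measurableSet_Ioc
  have hset : {x | 0 < χ x} = Set.Ioc a b := by
    ext x; rw [Set.mem_setOf_eq, hχ, Set.indicator_apply]
    split_ifs with h <;> simp [h]
  have hχconc : ConcaveOn ℝ {x | 0 < χ x} (fun x => Real.log (χ x)) := by
    constructor
    · rw [hset]; exact convex_Ioc a b
    · intro x hx y hy α β hα hβ hαβ
      have hxm : x ∈ Set.Ioc a b := by rw [← hset]; exact hx
      have hym : y ∈ Set.Ioc a b := by rw [← hset]; exact hy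
      have hcm : α • x + β • y ∈ Set.Ioc a b := (convex_Ioc a b) hxm hym hα hβ hαβ
      have hvx : χ x = 1 := by rw [hχ]; exact Set.indicator_of_mem hxm _
      have hvy : χ y = 1 := by rw [hχ]; exact Set.indicator_of_mem hym _
      have hvc : χ (α • x + β • y) = 1 := by rw [hχ]; exact Set.indicator_of_mem hcm _
      simp only [hvx, hvy, hvc, Real.log_one, smul_zero, add_zero, le_refl]
  set φ : ℝ → ℝ := fun g => ∫ t in a..b, f (t - g) with hφ
  have hrep : ∀ g, φ g = ∫ z, f (z - g) * χ z := by
    intro g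
    rw [hφ]
    simp only
    rw [intervalIntegral.integral_of_le hab.le,
      ← integral_indicator measurableSet_Ioc]
    congr 1
    funext z
    by_cases hz : z ∈ Set.Ioc a b <;> simp [hχ, Set.indicator_apply, hz]
  have hInt : ∀ c y : ℝ, Integrable (fun z => f (z - c) * χ (z + y)) := by
    intro c y
    have h1 : Integrable (fun z => f (z - c)) volume := hfi.comp_sub_right c
    refine h1.mono' ?_ ?_
    · exact ((hfm.comp (measurable_id.sub_const c)).mul
        (hχm.comp (measurable_id.add_const y))).aestronglyMeasurable
    · filter_upwards with z
      rw [Real.norm_eq_abs, abs_of_nonneg (mul_nonneg (hf0 _) (hχ0 _))]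
      exact mul_le_of_le_one_right (hf0 _) (hχ1 _)
  have hsingle : ∀ c y : ℝ, (∫ z, f (z - c) * χ (z + y)) = φ (c + y) := by
    intro c y
    have heq : (fun z => f (z - c) * χ (z + y))
        = fun z => (fun w => f (w - (c + y)) * χ w) (z + y) := by
      funext z
      simp only
      have : z + y - (c + y) = z - c := by ring
      rw [this]
    rw [heq, integral_add_right_eq_self (fun w => f (w - (c + y)) * χ w) y]
    exact (hrep (c + y)).symm
  have hpair : ∀ u q₁ q₂ v : ℝ, u ≤ q₁ → q₁ ≤ q₂ → q₂ ≤ v → q₁ + q₂ = u + v →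
      φ u * φ v ≤ φ q₁ * φ q₂ := by
    intro u q₁ q₂ v h1 h2 h3 hsum
    set d := q₁ - u with hd
    have hd0 : 0 ≤ d := by simp only [hd]; linarith
    have huq : u ≤ q₂ := h1.trans h2
    set H : ℝ × ℝ → ℝ := fun p =>
      (f p.1 * f (p.2 - d) - f p.2 * f (p.1 - d)) *
        (χ (p.1 + q₂) * χ (p.2 + u) - χ (p.1 + u) * χ (p.2 + q₂)) with hH
    have hpt : ∀ p : ℝ × ℝ, 0 ≤ H p := by
      rintro ⟨z, w⟩
      simp only [hH]
      rcases le_total z w with hzw | hzw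
      · have hfp : f (z - d) * f w ≤ f z * f (w - d) :=
          logconc_pair hf0 hflogconc (by linarith) hzw (by linarith) (by linarith)
            (by ring)
        have hcp : χ (z + u) * χ (w + q₂) ≤ χ (z + q₂) * χ (w + u) :=
          logconc_pair hχ0 hχconc (by linarith) (by linarith) (by linarith)
            (by linarith) (by ring)
        exact mul_nonneg (by linarith [mul_comm (f (z - d)) (f w)]) (by linarith)
      · have hfp : f (w - d) * f z ≤ f w * f (z - d) :=
          logconc_pair hf0 hflogconc (by linarith) hzw (by linarith) (by linarith)
            (by ring)
        have hcp : χ (w + u) * χ (z + q₂) ≤ χ (w + q₂) * χ (z + u) :=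
          logconc_pair hχ0 hχconc (by linarith) (by linarith) (by linarith)
            (by linarith) (by ring)
        refine mul_nonneg_iff.2 (Or.inr ⟨?_, ?_⟩)
        · nlinarith [hfp]
        · nlinarith [hcp]
    have hnn : 0 ≤ ∫ p, H p ∂(volume.prod volume) := integral_nonneg hpt
    -- expand
    set t1 : ℝ × ℝ → ℝ := fun p => (f (p.1 - 0) * χ (p.1 + q₂)) * (f (p.2 - d) * χ (p.2 + u)) with ht1
    set t2 : ℝ × ℝ → ℝ := fun p => (f (p.1 - 0) * χ (p.1 + u)) * (f (p.2 - d) * χ (p.2 + q₂)) with ht2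
    set t3 : ℝ × ℝ → ℝ := fun p => (f (p.1 - d) * χ (p.1 + q₂)) * (f (p.2 - 0) * χ (p.2 + u)) with ht3
    set t4 : ℝ × ℝ → ℝ := fun p => (f (p.1 - d) * χ (p.1 + u)) * (f (p.2 - 0) * χ (p.2 + q₂)) with ht4
    have hHe : H = fun p => t1 p - t2 p - t3 p + t4 p := by
      funext p
      simp only [hH, ht1, ht2, ht3, ht4, sub_zero]
      ring
    have hi1 : Integrable t1 (volume.prod volume) := (hInt 0 q₂).mul_prod (hInt d u)
    have hi2 : Integrable t2 (volume.prod volume) := (hInt 0 u).mul_prod (hInt d q₂)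
    have hi3 : Integrable t3 (volume.prod volume) := (hInt d q₂).mul_prod (hInt 0 u)
    have hi4 : Integrable t4 (volume.prod volume) := (hInt d u).mul_prod (hInt 0 q₂)
    have hexp : (∫ p, H p ∂(volume.prod volume))
        = φ q₂ * φ q₁ - φ u * φ v - φ v * φ u + φ q₁ * φ q₂ := by
      rw [hHe]
      simp only
      rw [integral_add (f := fun p => t1 p - t2 p - t3 p) (g := t4)
          ((hi1.sub hi2).sub hi3) hi4,
        integral_sub (f := fun p => t1 p - t2 p) (g := t3) (hi1.sub hi2) hi3,
        integral_sub (f := t1) (g := t2) hi1 hi2]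
      have e1 : (∫ p, t1 p ∂(volume.prod volume)) = φ q₂ * φ q₁ := by
        rw [ht1, integral_prod_mul (fun z => f (z - 0) * χ (z + q₂))
          (fun z => f (z - d) * χ (z + u)), hsingle 0 q₂, hsingle d u, zero_add]
        congr 2
        simp only [hd]; ring
      have e2 : (∫ p, t2 p ∂(volume.prod volume)) = φ u * φ v := by
        rw [ht2, integral_prod_mul (fun z => f (z - 0) * χ (z + u))
          (fun z => f (z - d) * χ (z + q₂)), hsingle 0 u, hsingle d q₂, zero_add]
        congr 2
        simp only [hd]; linarith
      have e3 : (∫ p, t3 p ∂(volume.prod volume)) = φ v * φ u := by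
        rw [ht3, integral_prod_mul (fun z => f (z - d) * χ (z + q₂))
          (fun z => f (z - 0) * χ (z + u)), hsingle d q₂, hsingle 0 u, zero_add]
        congr 2
        simp only [hd]; linarith
      have e4 : (∫ p, t4 p ∂(volume.prod volume)) = φ q₁ * φ q₂ := by
        rw [ht4, integral_prod_mul (fun z => f (z - d) * χ (z + u))
          (fun z => f (z - 0) * χ (z + q₂)), hsingle d u, hsingle 0 q₂, zero_add]
        congr 2
        simp only [hd]; ring
      rw [e1, e2, e3, e4]
    rw [hexp] at hnn
    nlinarith [hnn, mul_comm (φ q₂) (φ q₁)]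
  have hφ0 : ∀ g, 0 ≤ φ g := by
    intro g
    exact intervalIntegral.integral_nonneg hab.le (fun t _ => hf0 _)
  have hrepr2 : ∀ g, φ g = (∫ x in (0:ℝ)..(b - g), f x) - ∫ x in (0:ℝ)..(a - g), f x := by
    intro g
    rw [hφ]
    simp only
    rw [intervalIntegral.integral_comp_sub_right f g]
    exact (intervalIntegral.integral_interval_sub_left
      (hfi.intervalIntegrable) (hfi.intervalIntegrable)).symm
  have hφcont : Continuous φ := by
    have : φ = fun g => (∫ x in (0:ℝ)..(b - g), f x) - ∫ x in (0:ℝ)..(a - g), f x :=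
      funext hrepr2
    rw [this]
    have hprim : Continuous fun y : ℝ => ∫ x in (0:ℝ)..y, f x :=
      intervalIntegral.continuous_primitive (fun _ _ => hfi.intervalIntegrable) 0
    exact (hprim.comp (continuous_const.sub continuous_id)).sub
      (hprim.comp (continuous_const.sub continuous_id))
  set S : Set ℝ := {g | 0 < φ g} with hS
  have hbetween : ∀ u v w : ℝ, u ∈ S → v ∈ S → u ≤ w → w ≤ v → w ∈ S := by
    intro u v w hu hv h1 h2
    set w' := u + v - w with hw'
    rcases le_total w w' with h3 | h3
    · have := hpair u w w' v h1 h3 (by simp only [hw']; linarith) (by simp only [hw']; ring)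
      have hpos : 0 < φ w * φ w' := lt_of_lt_of_le (mul_pos hu hv) this
      by_contra hneg
      simp only [hS, Set.mem_setOf_eq, not_lt] at hneg
      have : φ w = 0 := le_antisymm hneg (hφ0 w)
      rw [this, zero_mul] at hpos
      exact lt_irrefl 0 hpos
    · have := hpair u w' w v (by simp only [hw']; linarith) h3 h2 (by simp only [hw']; ring)
      have hpos : 0 < φ w' * φ w := lt_of_lt_of_le (mul_pos hu hv) this
      by_contra hneg
      simp only [hS, Set.mem_setOf_eq, not_lt] at hneg
      have : φ w = 0 := le_antisymm hneg (hφ0 w)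
      rw [this, mul_zero] at hpos
      exact lt_irrefl 0 hpos
  have hSconv : Convex ℝ S := by
    intro u hu v hv α β hα hβ hαβ
    rcases le_total u v with huv | huv
    · refine hbetween u v _ hu hv ?_ ?_
      · have e1 : β * u ≤ β * v := mul_le_mul_of_nonneg_left huv hβ
        have e2 : α * u + β * u = u := by rw [← add_mul, hαβ, one_mul]
        simp only [smul_eq_mul]; linarith
      · have e1 : α * u ≤ α * v := mul_le_mul_of_nonneg_left huv hα
        have e2 : α * v + β * v = v := by rw [← add_mul, hαβ, one_mul]
        simp only [smul_eq_mul]; linarith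
    · refine hbetween v u _ hv hu ?_ ?_
      · have e1 : α * v ≤ α * u := mul_le_mul_of_nonneg_left huv hα
        have e2 : α * v + β * v = v := by rw [← add_mul, hαβ, one_mul]
        simp only [smul_eq_mul]; linarith
      · have e1 : β * v ≤ β * u := mul_le_mul_of_nonneg_left huv hβ
        have e2 : α * u + β * u = u := by rw [← add_mul, hαβ, one_mul]
        simp only [smul_eq_mul]; linarith
  have hgoal : ConcaveOn ℝ S (fun g => Real.log (φ g)) := by
    apply concaveOn_of_continuousOn_midpoint hSconv
    · exact Real.continuousOn_log.comp hφcont.continuousOn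
        (fun g hg => by simp only [Set.mem_compl_iff, Set.mem_singleton_iff]
                        exact ne_of_gt hg)
    · intro x hx y hy
      have hxS : 0 < φ x := hx
      have hyS : 0 < φ y := hy
      have hmmem : (x + y) / 2 ∈ S := by
        rcases le_total x y with hxy | hxy
        · exact hbetween x y _ hx hy (by linarith) (by linarith)
        · exact hbetween y x _ hy hx (by linarith) (by linarith)
      have hmpos : 0 < φ ((x + y) / 2) := hmmem
      have hineq : φ x * φ y ≤ φ ((x + y) / 2) * φ ((x + y) / 2) := by
        rcases le_total x y with hxy | hxy
        · exact hpair x ((x + y) / 2) ((x + y) / 2) y (by linarith) le_rfl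
            (by linarith) (by ring)
        · rw [mul_comm]
          exact hpair y ((x + y) / 2) ((x + y) / 2) x (by linarith) le_rfl
            (by linarith) (by ring)
      have hlog := Real.log_le_log (mul_pos hxS hyS) hineq
      rw [Real.log_mul (ne_of_gt hxS) (ne_of_gt hyS),
        Real.log_mul (ne_of_gt hmpos) (ne_of_gt hmpos)] at hlog
      linarith
  exact hgoal

/-- For real constants `a < b`, `g ↦ Φ(b - g) - Φ(a - g)` is log-concave on `ℝ`; more generally,
for any log-concave probability density `f` on `ℝ`, the function `g ↦ ∫ t in a..b, f (t - g)`
is log-concave in `g` (on the set where it is positive). -/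
theorem logConcave_quantized_prob (a b : ℝ) (hab : a < b) (f : ℝ → ℝ)
    (hf0 : ∀ x, 0 ≤ f x) (hfm : Measurable f) (hfi : Integrable f)
    (hf1 : ∫ x, f x = 1)
    (hflogconc : ConcaveOn ℝ {x | 0 < f x} (fun x => Real.log (f x))) :
    ConcaveOn ℝ Set.univ
      (fun g : ℝ => Real.log (stdNormalCDF (b - g) - stdNormalCDF (a - g))) ∧
    ConcaveOn ℝ {g : ℝ | 0 < ∫ t in a..b, f (t - g)}
      (fun g : ℝ => Real.log (∫ t in a..b, f (t - g))) := by
  constructor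
  · -- Gaussian case
    set c : ℝ := (Real.sqrt (2 * Real.pi))⁻¹ with hc
    have h2pi : (0:ℝ) < 2 * Real.pi := by positivity
    have hcpos : 0 < c := by rw [hc]; positivity
    set f₀ : ℝ → ℝ := fun t => c * Real.exp (-t ^ 2 / 2) with hf₀
    have hf₀pos : ∀ x, 0 < f₀ x := by
      intro x; rw [hf₀]; positivity
    have hf₀0 : ∀ x, 0 ≤ f₀ x := fun x => (hf₀pos x).le
    have hf₀m : Measurable f₀ := by
      rw [hf₀]; fun_prop
    have hexpint : Integrable (fun t : ℝ => Real.exp (-t ^ 2 / 2)) := by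
      have h := integrable_exp_neg_mul_sq (by norm_num : (0:ℝ) < 1/2)
      convert h using 2 with t
      ring
    have hf₀i : Integrable f₀ := by
      rw [hf₀]; exact hexpint.const_mul c
    have hf₀conc : ConcaveOn ℝ {x | 0 < f₀ x} (fun x => Real.log (f₀ x)) := by
      have hsetu : {x | 0 < f₀ x} = Set.univ :=
        Set.eq_univ_of_forall (fun x => hf₀pos x)
      have hfun : (fun x => Real.log (f₀ x)) = fun x => Real.log c + (-x ^ 2 / 2) := by
        funext x
        rw [hf₀]
        simp only
        rw [Real.log_mul (ne_of_gt hcpos) (Real.exp_ne_zero _), Real.log_exp]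
      rw [hsetu, hfun]
      refine ⟨convex_univ, ?_⟩
      intro x _ y _ α β hα hβ hαβ
      simp only [smul_eq_mul]
      have hL : α * Real.log c + β * Real.log c = Real.log c := by
        rw [← add_mul, hαβ, one_mul]
      nlinarith [sq_nonneg (x - y), mul_nonneg hα hβ]
    have hcdf : ∀ g : ℝ, stdNormalCDF (b - g) - stdNormalCDF (a - g)
        = ∫ t in a..b, f₀ (t - g) := by
      intro g
      have hle : a - g ≤ b - g := by linarith
      have hunion : Set.Iic (a - g) ∪ Set.Ioc (a - g) (b - g) = Set.Iic (b - g) :=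
        Set.Iic_union_Ioc_eq_Iic hle
      have hdisj : Disjoint (Set.Iic (a - g)) (Set.Ioc (a - g) (b - g)) :=
        Set.Iic_disjoint_Ioc le_rfl
      have hsplit : stdNormalCDF (b - g)
          = stdNormalCDF (a - g) + ∫ t in Set.Ioc (a - g) (b - g), f₀ t := by
        unfold stdNormalCDF
        rw [← hunion, setIntegral_union hdisj measurableSet_Ioc
          hf₀i.integrableOn hf₀i.integrableOn]
      rw [intervalIntegral.integral_comp_sub_right f₀ g,
        intervalIntegral.integral_of_le hle]
      rw [hsplit]; ring
    have hpos : ∀ g : ℝ, 0 < ∫ t in a..b, f₀ (t - g) := by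
      intro g
      apply intervalIntegral.intervalIntegral_pos_of_pos_on
      · exact (hf₀i.comp_sub_right g).intervalIntegrable
      · intro x _; exact hf₀pos _
      · exact hab
    have h2 := logconc_slide a b hab f₀ hf₀0 hf₀m hf₀i hf₀conc
    have hseteq : {g : ℝ | 0 < ∫ t in a..b, f₀ (t - g)} = Set.univ :=
      Set.eq_univ_of_forall (fun g => hpos g)
    have hfuneq : (fun g : ℝ => Real.log (stdNormalCDF (b - g) - stdNormalCDF (a - g)))
        = fun g : ℝ => Real.log (∫ t in a..b, f₀ (t - g)) := by
      funext g; rw [hcdf g]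
    rw [hfuneq, ← hseteq]
    exact h2
  · exact logconc_slide a b hab f hf0 hfm hfi hflogconc
end

section
/- Distinct circular shifts of a Zadoff–Chu sequence of prime length N with root u coprime to N are orthogonal: for the sequence x[n] = exp(−iπ u n(n+1)/N), and shifts 0 ≤ s ≠ t < N, ∑_{n=0}^{N−1} x[(n+s) mod N] conj(x[(n+t) mod N]) = 0. -/
/-- The Zadoff–Chu sequence of length `N` with root `u`: `x[n] = exp(-iπ u n(n+1)/N)`. -/
noncomputable def zadoffChu (N u n : ℕ) : ℂ :=
  Complex.exp ((-((Real.pi : ℂ) * (u : ℂ) * (n : ℂ) * ((n : ℂ) + 1)) / (N : ℂ)) * Complex.I)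

open Complex Finset

lemma zc_period (N u m : ℕ) (hN : 0 < N) (hodd : Odd N) :
    zadoffChu N u (m % N) =
      Complex.exp ((-((Real.pi : ℂ) * (u : ℂ) * (m : ℂ) * ((m : ℂ) + 1)) / (N : ℂ)) * Complex.I) := by
  unfold zadoffChu
  rw [Complex.exp_eq_exp_iff_exists_int]
  obtain ⟨b, hb⟩ := hodd
  have hbz : (N : ℤ) = 2 * b + 1 := by exact_mod_cast hb
  have hm : (m : ℤ) = (m % N : ℕ) + (m / N : ℕ) * N := by
    exact_mod_cast (Nat.mod_add_div' m N).symm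
  have hpar : ∃ j : ℤ, (m : ℤ) * ((m : ℤ) + 1) - ((m % N : ℕ) : ℤ) * (((m % N : ℕ) : ℤ) + 1)
      = 2 * (N : ℤ) * j := by
    rcases Int.even_or_odd ((m / N : ℕ) : ℤ) with ⟨a, ha⟩ | ⟨a, ha⟩
    · refine ⟨a * (2 * ((m % N : ℕ) : ℤ) + 1 + 2 * a * N), ?_⟩
      rw [hm, ha]; ring
    · refine ⟨(2 * a + 1) * (((m % N : ℕ) : ℤ) + 2 * a * b + a + b + 1), ?_⟩
      rw [hm, ha, hbz]; ring
  obtain ⟨j, hj⟩ := hpar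
  have hNC : (N : ℂ) ≠ 0 := Nat.cast_ne_zero.mpr hN.ne'
  have hjC : (m : ℂ) * ((m : ℂ) + 1) - ((m % N : ℕ) : ℂ) * (((m % N : ℕ) : ℂ) + 1)
      = 2 * (N : ℂ) * (j : ℂ) := by exact_mod_cast congrArg (Int.cast : ℤ → ℂ) hj
  refine ⟨(u : ℤ) * j, ?_⟩
  push_cast
  field_simp
  linear_combination (u : ℂ) * hjC

/-- Distinct circular shifts of a Zadoff–Chu sequence of odd prime length `N` with root `u`
coprime to `N` are orthogonal: for shifts `0 ≤ s ≠ t < N`,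
`∑_{n=0}^{N-1} x[(n+s) mod N] conj (x[(n+t) mod N]) = 0`. -/
theorem zadoffChu_shifts_orthogonal (N : ℕ) (hN : N.Prime) (hodd : Odd N)
    (u : ℕ) (hu : Nat.Coprime u N) (s t : ℕ) (hs : s < N) (ht : t < N) (hst : s ≠ t) :
    ∑ n ∈ Finset.range N,
      zadoffChu N u ((n + s) % N) * (starRingEnd ℂ) (zadoffChu N u ((n + t) % N)) = 0 := by
  have hN0 : 0 < N := hN.pos
  have hNC : (N : ℂ) ≠ 0 := Nat.cast_ne_zero.mpr hN0.ne'
  have hπ : (Real.pi : ℂ) ≠ 0 := Complex.ofReal_ne_zero.mpr Real.pi_ne_zero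
  set c : ℂ := (-((Real.pi : ℂ) * u * ((s : ℂ) - t) * ((s : ℂ) + t + 1)) / N) * Complex.I with hc
  set d : ℂ := (-(2 * (Real.pi : ℂ) * u * ((s : ℂ) - t)) / N) * Complex.I with hd
  have key : ∀ n ∈ Finset.range N,
      zadoffChu N u ((n + s) % N) * (starRingEnd ℂ) (zadoffChu N u ((n + t) % N))
        = Complex.exp c * Complex.exp d ^ n := by
    intro n _
    rw [zc_period N u (n + s) hN0 hodd, zc_period N u (n + t) hN0 hodd,
      ← Complex.exp_conj, ← Complex.exp_nat_mul, ← Complex.exp_add, ← Complex.exp_add]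
    congr 1
    simp only [map_mul, map_div₀, map_neg, map_add, map_one, Complex.conj_I,
      Complex.conj_natCast, Complex.conj_ofReal]
    rw [hc, hd]
    push_cast
    field_simp
    ring
  rw [Finset.sum_congr rfl key, ← Finset.mul_sum]
  have huσ : ¬ ((N : ℤ) ∣ (u : ℤ) * ((s : ℤ) - t)) := by
    intro hdvd
    rcases (Nat.prime_iff_prime_int.mp hN).dvd_mul.mp hdvd with h | h
    · exact (hN.coprime_iff_not_dvd.mp hu.symm) (Int.ofNat_dvd.mp h)
    · have habs : |(s : ℤ) - t| < (N : ℤ) := by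
        rw [abs_sub_lt_iff]; omega
      have := Int.eq_zero_of_abs_lt_dvd h habs
      omega
  have h1 : Complex.exp d ^ N = 1 := by
    rw [← Complex.exp_nat_mul]
    have : (N : ℂ) * d = ((-(u : ℤ) * ((s : ℤ) - t)) : ℤ) * (2 * Real.pi * Complex.I) := by
      rw [hd]; push_cast; field_simp
    rw [this, Complex.exp_int_mul_two_pi_mul_I]
  have h2 : Complex.exp d ≠ 1 := by
    intro h
    rw [Complex.exp_eq_one_iff] at h
    obtain ⟨k, hk⟩ := h
    rw [hd] at hk
    field_simp at hk
    have h2' : ((u : ℂ) * ((s : ℂ) - t)) * (2 * (Real.pi : ℂ) * Complex.I)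
        = ((-k : ℂ) * (N : ℂ)) * (2 * (Real.pi : ℂ) * Complex.I) := by
      linear_combination (-(2 * (Real.pi : ℂ) * Complex.I)) * hk
    have h2'' := mul_right_cancel₀
      (mul_ne_zero (mul_ne_zero two_ne_zero hπ) Complex.I_ne_zero) h2'
    have hZ : ((u : ℤ) * ((s : ℤ) - t)) = -k * N := by
      have : (((u : ℤ) * ((s : ℤ) - t) : ℤ) : ℂ) = ((-k * N : ℤ) : ℂ) := by
        push_cast
        linear_combination h2''
      exact_mod_cast this
    exact huσ ⟨-k, by linear_combination hZ⟩
  rw [geom_sum_eq h2, h1]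
  simp
end

section
/- A Zadoff–Chu sequence of odd prime length N with root u coprime to N has zero periodic autocorrelation at all nonzero lags: for 1 ≤ τ ≤ N−1, ∑_{n=0}^{N−1} x[n] conj(x[(n+τ) mod N]) = 0, where x[n] = exp(−iπ u n(n+1)/N). -/
/-!
Multiplying `x[n]` by `conj x[n + τ]` turns the quadratic phase into a linear one:
`x[n] · conj x[n + τ] = c · wⁿ` with `w = exp(2πi uτ/N)` and `c` independent of `n`.
For odd `N` the sequence is `N`-periodic, so the wrap-around `(n + τ) mod N` may be dropped,
and the autocorrelation is `c` times a full geometric sum of `w`. When `N` is prime and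
`0 < τ < N`, `uτ` is coprime to `N`, so `w` is a primitive `N`-th root of unity and the sum
vanishes.
-/

open Complex
open scoped Real

-- For `N = 2k + 1`, `(n + N)(n + N + 1) = n(n + 1) + 2N(n + k + 1)`.
theorem zadoffChu_periodic {N : ℕ} (hN : Odd N) (u : ℕ) : Function.Periodic (zadoffChu N u) N := by
  intro n
  obtain ⟨k, rfl⟩ := hN
  have hN0 : ((2 * k + 1 : ℕ) : ℂ) ≠ 0 := Nat.cast_ne_zero.mpr (by omega)
  have hphase : -(π * u * ((n + (2 * k + 1) : ℕ) : ℂ) * (((n + (2 * k + 1) : ℕ) : ℂ) + 1))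
        / ((2 * k + 1 : ℕ) : ℂ) * I
      = -(π * u * n * (n + 1)) / ((2 * k + 1 : ℕ) : ℂ) * I
        - (u * (n + k + 1) : ℕ) * (2 * π * I) := by
    field_simp
    push_cast
    ring
  rw [zadoffChu, zadoffChu, hphase, exp_sub, exp_nat_mul_two_pi_mul_I, div_one]

theorem zadoffChu_mul_conj_add (N u n τ : ℕ) :
    zadoffChu N u n * starRingEnd ℂ (zadoffChu N u (n + τ))
      = exp (π * u * τ * (τ + 1) / N * I) * exp (2 * π * I * ((u * τ : ℕ) / N)) ^ n := by
  rw [zadoffChu, zadoffChu, ← exp_conj, ← exp_nat_mul, ← exp_add, ← exp_add]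
  congr 1
  simp only [map_mul, map_div₀, map_neg, map_add, map_one, conj_ofReal, conj_natCast, conj_I]
  push_cast
  ring

/-- A Zadoff–Chu sequence of odd prime length `N` with root `u` coprime to `N` has zero periodic
autocorrelation at all nonzero lags `1 ≤ τ ≤ N - 1`. -/
theorem zadoffChu_autocorrelation_eq_zero (N : ℕ) (hN : N.Prime) (hodd : Odd N)
    (u : ℕ) (hu : Nat.Coprime u N) (τ : ℕ) (hτ1 : 1 ≤ τ) (hτ2 : τ ≤ N - 1) :
    ∑ n ∈ Finset.range N, zadoffChu N u n * (starRingEnd ℂ) (zadoffChu N u ((n + τ) % N)) = 0 := by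
  have hτ : τ.Coprime N := (Nat.coprime_of_lt_prime (by omega) (by omega) hN).symm
  have hw := isPrimitiveRoot_exp_of_coprime (u * τ) N hN.ne_zero (hu.mul_left hτ)
  simp_rw [(zadoffChu_periodic hodd u).map_mod_nat, zadoffChu_mul_conj_add, ← Finset.mul_sum,
    hw.geom_sum_eq_zero hN.one_lt, mul_zero]
end

section
/- Let f : ℝ^n → ℝ be given by f(h) = ∑_{i=1}^{m} w_i log(Φ(√2(u_i − a_iᵀh)) − Φ(√2(ℓ_i − a_iᵀh))), where w_i ≥ 0, ℓ_i < u_i (possibly ±∞), and a_i ∈ ℝ^n. Then f is concave on ℝ^n. -/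
open MeasureTheory ProbabilityTheory

section QGLAux

open Real Set Filter Topology intervalIntegral
open scoped NNReal ENNReal

namespace QGL


noncomputable def g (x : ℝ) : ℝ := Real.exp (-x^2)

lemma g_pos (x : ℝ) : 0 < g x := Real.exp_pos _

lemma g_eq : g = fun x => Real.exp (-1 * x^2) := by ext x; simp [g]

lemma g_int : Integrable g := by rw [g_eq]; exact integrable_exp_neg_mul_sq one_pos

lemma g_cont : Continuous g := by
  have : Continuous fun x : ℝ => -x^2 := by continuity
  exact Real.continuous_exp.comp this

lemma g_hasDeriv (x : ℝ) : HasDerivAt g (-2 * x * g x) x := by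
  have h1 : HasDerivAt (fun x : ℝ => -x^2) (-2 * x) x := by
    have := ((hasDerivAt_pow 2 x).neg)
    exact this.congr_deriv (by norm_num)
  have h2 := h1.exp
  have : (fun x : ℝ => rexp (-x^2)) = g := rfl
  rw [this] at h2
  convert h2 using 1
  simp [g]
  ring

lemma integral_g : ∫ x, g x = Real.sqrt π := by
  rw [g_eq, integral_gaussian]; simp

noncomputable def E (t : ℝ) : ℝ := ∫ x in Iic t, g x

lemma E_sub_E (a b : ℝ) : E b - E a = ∫ x in a..b, g x :=
  integral_Iic_sub_Iic g_int.integrableOn g_int.integrableOn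

lemma E_hasDeriv (t : ℝ) : HasDerivAt E (g t) t := by
  have key : ∀ s : ℝ, E s = E 0 + ∫ x in (0:ℝ)..s, g x := by
    intro s; rw [← E_sub_E]; ring
  have h0 : HasDerivAt (fun s => ∫ x in (0:ℝ)..s, g x) (g t) t :=
    intervalIntegral.integral_hasDerivAt_right (a := 0) (b := t)
      g_int.intervalIntegrable
      g_int.aestronglyMeasurable.stronglyMeasurableAtFilter
      g_cont.continuousAt
  have h : HasDerivAt (fun s => E 0 + ∫ x in (0:ℝ)..s, g x) (g t) t := h0.const_add (E 0)
  exact h.congr_of_eventuallyEq (Filter.Eventually.of_forall key)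

lemma E_strictMono : StrictMono E := by
  intro a b hab
  have h : 0 < ∫ x in a..b, g x :=
    intervalIntegral_pos_of_pos g_int.intervalIntegrable (fun x => g_pos x) hab
  linarith [E_sub_E a b]

lemma E_nonneg (t : ℝ) : 0 ≤ E t := setIntegral_nonneg measurableSet_Iic (fun x _ => (g_pos x).le)

lemma E_pos (t : ℝ) : 0 < E t := by
  have h := E_strictMono (show t - 1 < t by linarith)
  linarith [E_nonneg (t - 1)]

lemma E_add_tail (t : ℝ) : E t + (∫ x in Ioi t, g x) = Real.sqrt π := by
  have := integral_add_compl measurableSet_Iic g_int (f := g) (s := Iic t)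
  rw [compl_Iic] at this
  rw [← integral_g]; exact this

lemma tail_pos (t : ℝ) : 0 < ∫ x in Ioi t, g x := by
  have h1 : (∫ x in Ioc t (t+1), g x) ≤ ∫ x in Ioi t, g x := by
    apply setIntegral_mono_set g_int.integrableOn
      (Filter.Eventually.of_forall fun x => (g_pos x).le)
    exact HasSubset.Subset.eventuallyLE Ioc_subset_Ioi_self
  have h2 : 0 < ∫ x in Ioc t (t+1), g x := by
    rw [← intervalIntegral.integral_of_le (by linarith : t ≤ t + 1)]
    exact intervalIntegral_pos_of_pos g_int.intervalIntegrable (fun x => g_pos x)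
      (by linarith)
  linarith

lemma E_lt_sqrt_pi (t : ℝ) : E t < Real.sqrt π := by
  have := E_add_tail t; have := tail_pos t; linarith




lemma xg_int : Integrable (fun x => x * g x) := by
  rw [g_eq]; exact integrable_mul_exp_neg_mul_sq one_pos

lemma g_tendsto_atTop : Tendsto g atTop (𝓝 0) := by
  rw [g_eq]
  have h : Tendsto (fun x : ℝ => -1 * x^2) atTop atBot := by
    apply Tendsto.const_mul_atTop_of_neg (by norm_num : (-1:ℝ) < 0)
    exact tendsto_pow_atTop (by norm_num)
  exact Real.tendsto_exp_atBot.comp h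

lemma g_tendsto_atBot : Tendsto g atBot (𝓝 0) := by
  rw [g_eq]
  have h : Tendsto (fun x : ℝ => -1 * x^2) atBot atBot := by
    have h2 : Tendsto (fun x : ℝ => x^2) atBot atTop := by
      have := (tendsto_pow_atTop (n := 2) (by norm_num)).comp tendsto_neg_atBot_atTop (α := ℝ)
      simpa [Function.comp_def, neg_sq] using this
    apply Tendsto.const_mul_atTop_of_neg (by norm_num : (-1:ℝ) < 0) h2
  exact Real.tendsto_exp_atBot.comp h

noncomputable def F (s : ℝ) : ℝ := -g s / 2

lemma F_hasDeriv (s : ℝ) : HasDerivAt F (s * g s) s := by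
  have := (g_hasDeriv s).neg.div_const 2
  exact this.congr_deriv (by ring)

lemma integral_Ioi_xg (c : ℝ) : ∫ x in Ioi c, x * g x = g c / 2 := by
  have h := integral_Ioi_of_hasDerivAt_of_tendsto (f := F) (f' := fun x => x * g x) (a := c)
    (m := 0) (by
      exact ((g_cont.neg.div_const 2).continuousAt (x := c)).continuousWithinAt)
    (fun x _ => F_hasDeriv x) xg_int.integrableOn
    (by
      have := g_tendsto_atTop.neg.div_const 2
      rw [neg_zero, zero_div] at this; exact this)
  rw [h]; simp [F]; ring

lemma integral_Iic_xg (c : ℝ) : ∫ x in Iic c, x * g x = -(g c / 2) := by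
  have h := integral_Iic_of_hasDerivAt_of_tendsto (f := F) (f' := fun x => x * g x) (a := c)
    (m := 0) (by
      exact ((g_cont.neg.div_const 2).continuousAt (x := c)).continuousWithinAt)
    (fun x _ => F_hasDeriv x) xg_int.integrableOn
    (by
      have := g_tendsto_atBot.neg.div_const 2
      rw [neg_zero, zero_div] at this; exact this)
  rw [h]; simp [F]; ring

/-- Mills bound, lower tail: for `v < 0`, `(-2v) * E v ≤ g v`. -/
lemma mills_lower {v : ℝ} (hv : v < 0) : (-2 * v) * E v ≤ g v := by
  have hv0 : v ≠ 0 := ne_of_lt hv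
  have hmono : E v ≤ ∫ x in Iic v, (x / v) * g x := by
    apply setIntegral_mono_on g_int.integrableOn
      (((xg_int.div_const v).congr (Filter.Eventually.of_forall fun x : ℝ => by ring : _)).integrableOn)
      measurableSet_Iic
    intro x hx
    simp only [mem_Iic] at hx
    have h1 : (1:ℝ) ≤ x / v := by
      rw [le_div_iff_of_neg hv]; linarith
    nlinarith [g_pos x]
  have heq : ∫ x in Iic v, (x / v) * g x = (1/v) * ∫ x in Iic v, x * g x := by
    rw [← MeasureTheory.integral_const_mul]
    congr 1; ext x; ring
  rw [heq, integral_Iic_xg] at hmono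
  have hv' : (0:ℝ) < -v := by linarith
  calc (-2 * v) * E v ≤ (-2 * v) * ((1/v) * -(g v / 2)) := by
        apply mul_le_mul_of_nonneg_left hmono (by linarith)
    _ = g v := by field_simp
 
/-- Mills bound, upper tail: for `u > 0`, `(2u) * ∫_{Ioi u} g ≤ g u`. -/
lemma mills_upper {u : ℝ} (hu : 0 < u) : (2 * u) * (∫ x in Ioi u, g x) ≤ g u := by
  have hu0 : u ≠ 0 := ne_of_gt hu
  have hmono : (∫ x in Ioi u, g x) ≤ ∫ x in Ioi u, (x / u) * g x := by
    apply setIntegral_mono_on g_int.integrableOn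
      (((xg_int.div_const u).congr (Filter.Eventually.of_forall fun x : ℝ => by ring : _)).integrableOn)
      measurableSet_Ioi
    intro x hx
    simp only [mem_Ioi] at hx
    have h1 : (1:ℝ) ≤ x / u := by
      rw [le_div_iff₀ hu]; linarith
    nlinarith [g_pos x]
  have heq : ∫ x in Ioi u, (x / u) * g x = (1/u) * ∫ x in Ioi u, x * g x := by
    rw [← MeasureTheory.integral_const_mul]
    congr 1; ext x; ring
  rw [heq, integral_Ioi_xg] at hmono
  calc (2 * u) * (∫ x in Ioi u, g x) ≤ (2 * u) * ((1/u) * (g u / 2)) := by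
        apply mul_le_mul_of_nonneg_left hmono (by linarith)
    _ = g u := by field_simp

/-- FTC on finite interval: `g u - g v = ∫ u..v, 2x g x`. -/
lemma g_sub_g (u v : ℝ) : g u - g v = ∫ x in u..v, 2 * x * g x := by
  have h := intervalIntegral.integral_eq_sub_of_hasDerivAt (a := u) (b := v)
    (f := fun s => -g s) (f' := fun s => 2 * s * g s)
    (fun x _ => by
      have := (g_hasDeriv x).neg
      exact this.congr_deriv (by ring))
    (by
      apply Continuous.intervalIntegrable
      exact (continuous_const.mul continuous_id).mul g_cont)
  rw [h]; ring

lemma twoxg_intervalIntegrable (u v : ℝ) : IntervalIntegrable (fun x => 2 * x * g x) volume u v :=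
  Continuous.intervalIntegrable ((continuous_const.mul continuous_id).mul g_cont) u v


/-- For `u ≤ v` : `2u (E v - E u) ≤ g u - g v ≤ 2v (E v - E u)`. -/
lemma mean_bounds {u v : ℝ} (huv : u ≤ v) :
    2 * u * (E v - E u) ≤ g u - g v ∧ g u - g v ≤ 2 * v * (E v - E u) := by
  rw [E_sub_E, g_sub_g]
  constructor
  · calc 2 * u * ∫ x in u..v, g x = ∫ x in u..v, 2 * u * g x := by
          rw [← intervalIntegral.integral_const_mul]
      _ ≤ ∫ x in u..v, 2 * x * g x := by
          apply intervalIntegral.integral_mono_on huv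
            (Continuous.intervalIntegrable (continuous_const.mul g_cont) u v)
            (twoxg_intervalIntegrable u v)
          intro x hx
          show 2 * u * g x ≤ 2 * x * g x
          nlinarith [g_pos x, hx.1]
  · calc (∫ x in u..v, 2 * x * g x) ≤ ∫ x in u..v, 2 * v * g x := by
          apply intervalIntegral.integral_mono_on huv
            (twoxg_intervalIntegrable u v)
            (Continuous.intervalIntegrable (continuous_const.mul g_cont) u v)
          intro x hx
          show 2 * x * g x ≤ 2 * v * g x
          nlinarith [g_pos x, hx.2]
      _ = 2 * v * ∫ x in u..v, g x := by
          rw [← intervalIntegral.integral_const_mul]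



/-- Core criterion: positive twice-differentiable `G` with `G'' G ≤ G'²` has concave log. -/
lemma concave_log {G G' G'' : ℝ → ℝ}
    (hG : ∀ t, HasDerivAt G (G' t) t) (hG' : ∀ t, HasDerivAt G' (G'' t) t)
    (hpos : ∀ t, 0 < G t) (hineq : ∀ t, G'' t * G t ≤ G' t * G' t) :
    ConcaveOn ℝ Set.univ (fun t => Real.log (G t)) := by
  apply concaveOn_of_hasDerivWithinAt2_nonpos convex_univ
    (f' := fun t => G' t / G t)
    (f'' := fun t => (G'' t * G t - G' t * G' t) / (G t)^2)
  · exact fun t _ => ((hG t).continuousAt.log (hpos t).ne').continuousWithinAt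
  · intro x _
    exact ((hG x).log (hpos x).ne').hasDerivWithinAt
  · intro x _
    have h := (hG' x).div (hG x) (hpos x).ne'
    exact h.hasDerivWithinAt
  · intro x _
    apply div_nonpos_of_nonpos_of_nonneg
    · linarith [hineq x]
    · positivity

lemma hasDerivAt_sub_const' (b t : ℝ) : HasDerivAt (fun t : ℝ => b - t) (-1) t := by
  simpa using ((hasDerivAt_id t).const_sub b)

/-- Case `Iio`: `t ↦ log (E (b - t))` is concave. -/
lemma concave_log_Iio (b : ℝ) : ConcaveOn ℝ Set.univ (fun t => Real.log (E (b - t))) := by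
  apply concave_log (G' := fun t => -g (b - t))
    (G'' := fun t => -2 * (b - t) * g (b - t))
  · intro t
    have := (E_hasDeriv (b - t)).comp t (hasDerivAt_sub_const' b t)
    exact this.congr_deriv (by ring)
  · intro t
    have := ((g_hasDeriv (b - t)).comp t (hasDerivAt_sub_const' b t)).neg
    exact this.congr_deriv (by ring)
  · exact fun t => E_pos _
  · intro t
    set v := b - t with hv
    rcases le_or_gt 0 v with h | h
    · nlinarith [mul_pos (g_pos v) (g_pos v),
        mul_nonneg (mul_nonneg (by linarith : (0:ℝ) ≤ 2 * v) (g_pos v).le) (E_pos v).le]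
    · nlinarith [mills_lower h, g_pos v, E_pos v]

/-- Case `Ici`: `t ↦ log (√π - E (a - t))` is concave. -/
lemma concave_log_Ici (a : ℝ) :
    ConcaveOn ℝ Set.univ (fun t => Real.log (Real.sqrt π - E (a - t))) := by
  apply concave_log (G' := fun t => g (a - t))
    (G'' := fun t => 2 * (a - t) * g (a - t))
  · intro t
    have := ((E_hasDeriv (a - t)).comp t (hasDerivAt_sub_const' a t)).const_sub (Real.sqrt π)
    exact this.congr_deriv (by ring)
  · intro t
    have := (g_hasDeriv (a - t)).comp t (hasDerivAt_sub_const' a t)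
    exact this.congr_deriv (by ring)
  · exact fun t => by linarith [E_lt_sqrt_pi (a - t)]
  · intro t
    set u := a - t with hu
    have htail : Real.sqrt π - E u = ∫ x in Ioi u, g x := by linarith [E_add_tail u]
    rcases le_or_gt u 0 with h | h
    · nlinarith [mul_pos (g_pos u) (g_pos u),
        mul_nonneg (mul_nonneg (by linarith : (0:ℝ) ≤ -(2 * u)) (g_pos u).le)
          (by linarith [E_lt_sqrt_pi u] : (0:ℝ) ≤ Real.sqrt π - E u)]
    · rw [htail]
      nlinarith [mills_upper h, g_pos u]

/-- Case `Ico`: `t ↦ log (E (b - t) - E (a - t))` is concave for `a < b`. -/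
lemma concave_log_Ico {a b : ℝ} (hab : a < b) :
    ConcaveOn ℝ Set.univ (fun t => Real.log (E (b - t) - E (a - t))) := by
  apply concave_log (G' := fun t => g (a - t) - g (b - t))
    (G'' := fun t => 2 * (a - t) * g (a - t) - 2 * (b - t) * g (b - t))
  · intro t
    have h1 := (E_hasDeriv (b - t)).comp t (hasDerivAt_sub_const' b t)
    have h2 := (E_hasDeriv (a - t)).comp t (hasDerivAt_sub_const' a t)
    have := h1.sub h2
    exact this.congr_deriv (by ring)
  · intro t
    have h1 := (g_hasDeriv (a - t)).comp t (hasDerivAt_sub_const' a t)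
    have h2 := (g_hasDeriv (b - t)).comp t (hasDerivAt_sub_const' b t)
    have := h1.sub h2
    exact this.congr_deriv (by ring)
  · intro t
    have := E_strictMono (show a - t < b - t by linarith)
    linarith
  · intro t
    set u := a - t with hu
    set v := b - t with hv
    have huv : u ≤ v := by simp only [hu, hv]; linarith
    obtain ⟨h1, h2⟩ := mean_bounds huv
    nlinarith [g_pos u, g_pos v,
      mul_le_mul_of_nonneg_right h1 (g_pos u).le,
      mul_le_mul_of_nonneg_right h2 (g_pos v).le]



lemma setIntegral_comp_sub (t : ℝ) {S T : Set ℝ} (hS : MeasurableSet S) (hT : MeasurableSet T)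
    (h : ∀ x : ℝ, x ∈ S ↔ x - t ∈ T) :
    ∫ x in S, g (x - t) = ∫ x in T, g x := by
  rw [← MeasureTheory.integral_indicator hS, ← MeasureTheory.integral_indicator hT]
  have hpt : ∀ x, S.indicator (fun x => g (x - t)) x = T.indicator g (x - t) := by
    intro x
    by_cases hx : x ∈ S
    · rw [indicator_of_mem hx, indicator_of_mem ((h x).1 hx)]
    · rw [indicator_of_notMem hx, indicator_of_notMem (fun hc => hx ((h x).2 hc))]
  simp_rw [hpt]
  exact integral_sub_right_eq_self (T.indicator g) t

lemma integral_univ_shift (t : ℝ) : ∫ x in (univ : Set ℝ), g (x - t) = Real.sqrt π := by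
  rw [Measure.restrict_univ, integral_sub_right_eq_self g t, integral_g]

lemma integral_Iio_shift (b t : ℝ) : ∫ x in Iio b, g (x - t) = E (b - t) := by
  rw [setIntegral_comp_sub t (T := Iio (b - t)) measurableSet_Iio measurableSet_Iio
    (fun x => by simp [sub_lt_sub_iff_right])]
  exact (integral_Iic_eq_integral_Iio (f := g)).symm

lemma integral_Ici_shift (a t : ℝ) :
    ∫ x in Ici a, g (x - t) = Real.sqrt π - E (a - t) := by
  rw [setIntegral_comp_sub t (T := Ici (a - t)) measurableSet_Ici measurableSet_Ici
    (fun x => by simp [sub_le_sub_iff_right])]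
  rw [integral_Ici_eq_integral_Ioi]
  linarith [E_add_tail (a - t)]

lemma integral_Ico_shift {a b : ℝ} (hab : a ≤ b) (t : ℝ) :
    ∫ x in Ico a b, g (x - t) = E (b - t) - E (a - t) := by
  rw [setIntegral_comp_sub t (T := Ico (a - t) (b - t)) measurableSet_Ico measurableSet_Ico
    (fun x => by simp [sub_le_sub_iff_right, sub_lt_sub_iff_right])]
  rw [integral_Ico_eq_integral_Ioo, ← integral_Ioc_eq_integral_Ioo,
    ← intervalIntegral.integral_of_le (by linarith : a - t ≤ b - t)]
  exact (E_sub_E (a - t) (b - t)).symm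

lemma sqrt_pi_pos : 0 < Real.sqrt π := Real.sqrt_pos.mpr Real.pi_pos

lemma gauss_toReal (t : ℝ) (S : Set ℝ) :
    ((gaussianReal t (1/2)) S).toReal = (Real.sqrt π)⁻¹ * ∫ x in S, g (x - t) := by
  rw [gaussianReal_apply_eq_integral t (by norm_num) S]
  rw [ENNReal.toReal_ofReal (integral_nonneg (fun x => gaussianPDFReal_nonneg _ _ _))]
  have h : ∀ x : ℝ, gaussianPDFReal t (1/2) x = (Real.sqrt π)⁻¹ * g (x - t) := by
    intro x
    rw [gaussianPDFReal]
    have h2 : (2 : ℝ) * π * ((1/2 : ℝ≥0) : ℝ) = π := by push_cast; ring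
    have h3 : (2 : ℝ) * ((1/2 : ℝ≥0) : ℝ) = 1 := by push_cast; ring
    rw [h2, h3, div_one]
    rfl
  simp_rw [h]
  exact integral_const_mul _ _



lemma concave_transfer {S : Set ℝ} {G : ℝ → ℝ}
    (hform : ∀ t, ∫ x in S, g (x - t) = G t)
    (hpos : ∀ t, 0 < G t)
    (hG : ConcaveOn ℝ Set.univ (fun t => Real.log (G t))) :
    ConcaveOn ℝ Set.univ (fun t : ℝ => Real.log (((gaussianReal t (1/2)) S).toReal)) := by
  have heq : (fun t : ℝ => Real.log (((gaussianReal t (1/2)) S).toReal))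
      = fun t => Real.log (Real.sqrt π)⁻¹ + Real.log (G t) := by
    funext t
    rw [gauss_toReal, hform, Real.log_mul (inv_ne_zero sqrt_pi_pos.ne') (hpos t).ne']
  rw [heq]
  exact (concaveOn_const _ convex_univ).add hG

lemma concave_case (l u : EReal) (hlu : l < u) :
    ConcaveOn ℝ Set.univ (fun t : ℝ =>
      Real.log (((gaussianReal t (1/2)) {x : ℝ | l ≤ (x : EReal) ∧ (x : EReal) < u}).toReal)) := by
  induction l with
  | bot =>
    induction u with
    | bot => simp at hlu
    | coe b =>
      have hset : {x : ℝ | (⊥ : EReal) ≤ (x : EReal) ∧ (x : EReal) < (b : EReal)} = Iio b := by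
        ext x; simp [EReal.coe_lt_coe_iff]
      rw [hset]
      exact concave_transfer (integral_Iio_shift b) (fun t => E_pos _) (concave_log_Iio b)
    | top =>
      have hset : {x : ℝ | (⊥ : EReal) ≤ (x : EReal) ∧ (x : EReal) < (⊤ : EReal)} = univ := by
        ext x; simp [EReal.coe_lt_top]
      rw [hset]
      refine concave_transfer integral_univ_shift (fun t => sqrt_pi_pos) ?_
      exact concaveOn_const _ convex_univ
  | coe a =>
    induction u with
    | bot => exact absurd hlu (by simp)
    | coe b =>
      have hab : a < b := by exact_mod_cast hlu
      have hset : {x : ℝ | (a : EReal) ≤ (x : EReal) ∧ (x : EReal) < (b : EReal)} = Ico a b := by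
        ext x; simp [EReal.coe_le_coe_iff, EReal.coe_lt_coe_iff]
      rw [hset]
      refine concave_transfer (integral_Ico_shift hab.le) (fun t => ?_) (concave_log_Ico hab)
      have := E_strictMono (show a - t < b - t by linarith)
      linarith
    | top =>
      have hset : {x : ℝ | (a : EReal) ≤ (x : EReal) ∧ (x : EReal) < (⊤ : EReal)} = Ici a := by
        ext x; simp [EReal.coe_le_coe_iff, EReal.coe_lt_top]
      rw [hset]
      refine concave_transfer (integral_Ici_shift a) (fun t => ?_) (concave_log_Ici a)
      linarith [E_lt_sqrt_pi (a - t)]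
  | top => exact absurd hlu (by simp)

lemma concaveOn_comp_linear {n : ℕ} {φ : ℝ → ℝ} (hφ : ConcaveOn ℝ Set.univ φ)
    (c : EuclideanSpace ℝ (Fin n)) :
    ConcaveOn ℝ Set.univ (fun h : EuclideanSpace ℝ (Fin n) => φ (∑ j, c j * h j)) := by
  refine ⟨convex_univ, fun x _ y _ p q hp hq hpq => ?_⟩
  have hlin : ∑ j, c j * (p • x + q • y) j
      = p • (∑ j, c j * x j) + q • (∑ j, c j * y j) := by
    simp only [smul_eq_mul, Finset.mul_sum, ← Finset.sum_add_distrib]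
    refine Finset.sum_congr rfl fun j _ => ?_
    simp only [PiLp.add_apply, PiLp.smul_apply, smul_eq_mul]
    ring
  simp only [hlin]
  exact hφ.2 (mem_univ _) (mem_univ _) hp hq hpq

lemma concaveOn_sum {n m : ℕ} (F : Fin m → EuclideanSpace ℝ (Fin n) → ℝ)
    (h : ∀ i, ConcaveOn ℝ Set.univ (F i)) :
    ConcaveOn ℝ Set.univ (fun x : EuclideanSpace ℝ (Fin n) => ∑ i, F i x) := by
  classical
  induction (Finset.univ : Finset (Fin m)) using Finset.induction with
  | empty => simpa using concaveOn_const (0:ℝ) convex_univ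
  | insert a s hnot ih =>
    simp_rw [Finset.sum_insert hnot]
    exact (h _).add ih


end QGL

end QGLAux

/-- The quantized-Gaussian log-likelihood
`f(h) = ∑ i, w_i log P(N(a_iᵀ h, 1/2) ∈ [ℓ_i, u_i))`, with nonnegative weights `w_i` and
intervals `ℓ_i < u_i` (possibly infinite endpoints), is concave on `ℝⁿ`. -/
theorem concaveOn_quantized_gaussian_loglik {n m : ℕ} (w : Fin m → ℝ) (hw : ∀ i, 0 ≤ w i)
    (l u : Fin m → EReal) (hlu : ∀ i, l i < u i)
    (a : Fin m → EuclideanSpace ℝ (Fin n)) :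
    ConcaveOn ℝ Set.univ (fun h : EuclideanSpace ℝ (Fin n) =>
      ∑ i, w i * Real.log
        (((gaussianReal (∑ j, a i j * h j) (1 / 2))
          {x : ℝ | l i ≤ (x : EReal) ∧ (x : EReal) < u i}).toReal)) := by
  apply QGL.concaveOn_sum
  intro i
  have h1 := QGL.concave_case (l i) (u i) (hlu i)
  have h2 := QGL.concaveOn_comp_linear h1 (a i)
  have h3 := h2.smul (hw i)
  simpa [smul_eq_mul] using h3
end

section
/- Let a ∈ ℝ^n be a random vector, and for each realization of a and each h ∈ ℝ^n define g_a(h) = ∑_{s∈S} p_{aᵀh₀}(s) log p_{aᵀh}(s), the negative cross entropy of the PMFs obtained by quantizing N(aᵀh₀, 1/2) and N(aᵀh, 1/2) by a fixed finite interval partition. Then f(h) = E_a[g_a(h)] is concave in h and attains its maximum at h = h₀. -/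
/-!
Each cell probability `Q(μ) = P(N(μ, v) ∈ [ℓ, u))` is log-concave in `μ`. For a bounded cell,
`Q(μ) = ∫_{ℓ-μ}^{u-μ} φ`, where the density satisfies `φ' = -(y/v) φ` with `y/v` increasing;
hence `((ℓ-μ)/v) Q ≤ Q' ≤ ((u-μ)/v) Q`, which gives `Q'' Q ≤ Q'^2`. Unbounded cells are
increasing limits of bounded ones. The integrand is therefore a nonnegative combination of concave
functions of the linear form `aᵀh`, and so is its expectation. The maximum at `h₀` is Gibbs'
inequality for each realization of `a`: a cell has positive probability under one `N(μ, v)` iff it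
has positive Lebesgue measure, hence iff it does under every other.
-/

open MeasureTheory ProbabilityTheory

open Real Set Filter Topology
open scoped NNReal

theorem concaveOn_log_of_hasDerivAt {N N' N'' : ℝ → ℝ} (hN : ∀ x, 0 < N x)
    (hN' : ∀ x, HasDerivAt N (N' x) x) (hN'' : ∀ x, HasDerivAt N' (N'' x) x)
    (h : ∀ x, N'' x * N x ≤ N' x ^ 2) : ConcaveOn ℝ univ fun x => log (N x) := by
  have hlog : ∀ x, HasDerivAt (fun x => log (N x)) (N' x / N x) x :=
    fun x => (hN' x).log (hN x).ne'
  have hlog' : ∀ x, HasDerivAt (fun x => N' x / N x)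
      ((N'' x * N x - N' x * N' x) / N x ^ 2) x :=
    fun x => (hN'' x).div (hN' x) (hN x).ne'
  have hderiv : deriv (fun x => log (N x)) = fun x => N' x / N x :=
    funext fun x => (hlog x).deriv
  refine concaveOn_univ_of_deriv2_nonpos (fun x => (hlog x).differentiableAt) ?_ fun x => ?_
  · rw [hderiv]
    exact fun x => (hlog' x).differentiableAt
  · rw [Function.iterate_succ_apply, Function.iterate_one, hderiv, (hlog' x).deriv]
    exact div_nonpos_of_nonpos_of_nonneg (by nlinarith [h x]) (sq_nonneg _)

section Concavity

variable {E : Type*} [AddCommGroup E] [Module ℝ E] {s : Set E}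

theorem ConcaveOn.of_tendsto {ι : Type*} {l : Filter ι} [l.NeBot] {f : ι → E → ℝ} {F : E → ℝ}
    (hf : ∀ i, ConcaveOn ℝ s (f i))
    (hF : ∀ x ∈ s, Tendsto (fun i => f i x) l (𝓝 (F x))) : ConcaveOn ℝ s F := by
  obtain ⟨i₀⟩ := Filter.nonempty_of_neBot l
  refine ⟨(hf i₀).1, fun x hx y hy a b ha hb hab => ?_⟩
  exact le_of_tendsto_of_tendsto' (((hF x hx).const_smul a).add ((hF y hy).const_smul b))
    (hF _ ((hf i₀).1 hx hy ha hb hab)) fun i => (hf i).2 hx hy ha hb hab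

theorem ConcaveOn.sum {ι : Type*} (t : Finset ι) {f : ι → E → ℝ} (hs : Convex ℝ s)
    (hf : ∀ i ∈ t, ConcaveOn ℝ s (f i)) : ConcaveOn ℝ s fun x => ∑ i ∈ t, f i x := by
  classical
  induction t using Finset.induction_on with
  | empty => simpa using concaveOn_const 0 hs
  | insert i t hi ih =>
    simp only [Finset.sum_insert hi]
    exact (hf i (Finset.mem_insert_self i t)).add
      (ih fun j hj => hf j (Finset.mem_insert_of_mem hj))

theorem ConcaveOn.integral {Ω : Type*} [MeasurableSpace Ω] {P : Measure Ω} {f : Ω → E → ℝ}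
    (hs : Convex ℝ s) (hf : ∀ ω, ConcaveOn ℝ s (f ω))
    (hint : ∀ x ∈ s, Integrable (fun ω => f ω x) P) :
    ConcaveOn ℝ s fun x => ∫ ω, f ω x ∂P := by
  refine ⟨hs, fun x hx y hy a b ha hb hab => ?_⟩
  calc a • ∫ ω, f ω x ∂P + b • ∫ ω, f ω y ∂P = ∫ ω, a • f ω x + b • f ω y ∂P := by
        rw [← integral_smul, ← integral_smul]
        exact (integral_add ((hint x hx).smul a) ((hint y hy).smul b)).symm
    _ ≤ ∫ ω, f ω (a • x + b • y) ∂P :=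
        integral_mono (((hint x hx).smul a).add ((hint y hy).smul b))
          (hint _ (hs hx hy ha hb hab)) fun ω => (hf ω).2 hx hy ha hb hab

end Concavity

section LogConcaveDensity

variable {φ g : ℝ → ℝ}

theorem integral_mul_eq_sub_of_hasDerivAt (hφ : ∀ y, HasDerivAt φ (-(g y * φ y)) y)
    (hg : Monotone g) (α β : ℝ) : ∫ y in α..β, g y * φ y = φ α - φ β := by
  have hφc : Continuous φ := continuous_iff_continuousAt.2 fun y => (hφ y).continuousAt
  rw [intervalIntegral.integral_eq_sub_of_hasDerivAt (f := fun y => -φ y)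
    (fun y _ => (hφ y).neg.congr_deriv (neg_neg _))
    (hg.intervalIntegrable.mul_continuousOn hφc.continuousOn)]
  ring

theorem mul_integral_le_sub_le_mul_integral (hφ : ∀ y, HasDerivAt φ (-(g y * φ y)) y)
    (hg : Monotone g) (hφ₀ : ∀ y, 0 ≤ φ y) {α β : ℝ} (hαβ : α ≤ β) :
    g α * ∫ y in α..β, φ y ≤ φ α - φ β ∧ φ α - φ β ≤ g β * ∫ y in α..β, φ y := by
  have hφc : Continuous φ := continuous_iff_continuousAt.2 fun y => (hφ y).continuousAt
  have hint : IntervalIntegrable (fun y => g y * φ y) volume α β :=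
    hg.intervalIntegrable.mul_continuousOn hφc.continuousOn
  rw [← integral_mul_eq_sub_of_hasDerivAt hφ hg, ← intervalIntegral.integral_const_mul,
    ← intervalIntegral.integral_const_mul]
  constructor
  · refine intervalIntegral.integral_mono_on hαβ ((hφc.intervalIntegrable _ _).const_mul _) hint
      fun y hy => ?_
    exact mul_le_mul_of_nonneg_right (hg hy.1) (hφ₀ y)
  · refine intervalIntegral.integral_mono_on hαβ hint ((hφc.intervalIntegrable _ _).const_mul _)
      fun y hy => ?_
    exact mul_le_mul_of_nonneg_right (hg hy.2) (hφ₀ y)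

theorem concaveOn_log_integral_sub (hφ : ∀ y, HasDerivAt φ (-(g y * φ y)) y)
    (hg : Monotone g) (hφ₀ : ∀ y, 0 < φ y) {a b : ℝ} (hab : a < b) :
    ConcaveOn ℝ univ fun μ => log (∫ y in a - μ..b - μ, φ y) := by
  have hφc : Continuous φ := continuous_iff_continuousAt.2 fun y => (hφ y).continuousAt
  set G : ℝ → ℝ := fun t => ∫ y in 0..t, φ y
  have hG : ∀ μ, (∫ y in a - μ..b - μ, φ y) = G (b - μ) - G (a - μ) := fun μ =>
    (intervalIntegral.integral_interval_sub_left (hφc.intervalIntegrable _ _)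
      (hφc.intervalIntegrable _ _)).symm
  refine concaveOn_log_of_hasDerivAt (N' := fun μ => φ (a - μ) - φ (b - μ))
    (N'' := fun μ => g (a - μ) * φ (a - μ) - g (b - μ) * φ (b - μ)) (fun μ => ?_) (fun μ => ?_)
    (fun μ => ?_) (fun μ => ?_)
  · exact intervalIntegral.intervalIntegral_pos_of_pos_on (hφc.intervalIntegrable _ _)
      (fun y _ => hφ₀ y) (by linarith)
  · simp only [hG]
    have hGd : ∀ t, HasDerivAt G (φ t) t := fun t => (hφc.integral_hasStrictDerivAt 0 t).hasDerivAt
    exact (((hGd _).comp_const_sub b μ).sub ((hGd _).comp_const_sub a μ)).congr_deriv (by ring)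
  · exact (((hφ _).comp_const_sub a μ).sub ((hφ _).comp_const_sub b μ)).congr_deriv (by ring)
  · obtain ⟨hlow, hup⟩ := mul_integral_le_sub_le_mul_integral hφ hg (fun y => (hφ₀ y).le)
      (by linarith : a - μ ≤ b - μ)
    nlinarith [mul_le_mul_of_nonneg_left hlow (hφ₀ (a - μ)).le,
      mul_le_mul_of_nonneg_left hup (hφ₀ (b - μ)).le]

end LogConcaveDensity

theorem EReal.exists_Ico_eq_setOf_inter_Ico (l u : EReal) (c d : ℝ) :
    ∃ a b : ℝ, {x : ℝ | l ≤ x ∧ (x : EReal) < u} ∩ Ico c d = Ico a b := by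
  induction l using EReal.rec <;> induction u using EReal.rec
  case bot.bot | coe.bot | top.bot | top.coe | top.top => exact ⟨0, 0, by ext; simp⟩
  case bot.coe b => exact ⟨c, min b d, by ext; simp [and_comm, and_assoc]⟩
  case bot.top => exact ⟨c, d, by ext; simp⟩
  case coe.coe a b => exact ⟨max a c, min b d, by ext; simp; tauto⟩
  case coe.top a => exact ⟨max a c, d, by ext; simp [and_assoc]⟩

theorem hasDerivAt_gaussianPDFReal (μ : ℝ) (v : ℝ≥0) (x : ℝ) :
    HasDerivAt (gaussianPDFReal μ v) (-((x - μ) / v * gaussianPDFReal μ v x)) x := by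
  have hsq : HasDerivAt (fun x => (x - μ) ^ 2) (2 * (x - μ)) x := by
    simpa using ((hasDerivAt_id x).sub_const μ).fun_pow 2
  have hexp : HasDerivAt (fun y => rexp (-(y - μ) ^ 2 / (2 * v)))
      (rexp (-(x - μ) ^ 2 / (2 * v)) * (-(2 * (x - μ)) / (2 * v))) x :=
    (hsq.fun_neg.div_const _).exp
  refine (hexp.const_mul (√(2 * π * v))⁻¹).congr_deriv ?_
  simp only [gaussianPDFReal]
  ring

section GaussianCell

variable {v : ℝ≥0}

theorem gaussianReal_real_eq_zero_iff (hv : v ≠ 0) (μ : ℝ) {A : Set ℝ} :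
    (gaussianReal μ v).real A = 0 ↔ volume A = 0 :=
  (measureReal_eq_zero_iff (measure_ne_top _ _)).trans
    ⟨fun h => gaussianReal_absolutelyContinuous' μ hv h,
      fun h => gaussianReal_absolutelyContinuous μ hv h⟩

theorem gaussianReal_real_Ico (hv : v ≠ 0) (μ : ℝ) {a b : ℝ} (hab : a ≤ b) :
    (gaussianReal μ v).real (Ico a b) = ∫ y in a - μ..b - μ, gaussianPDFReal 0 v y := by
  rw [measureReal_def, gaussianReal_apply_eq_integral μ hv, ENNReal.toReal_ofReal
    (setIntegral_nonneg measurableSet_Ico fun x _ => gaussianPDFReal_nonneg μ v x),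
    integral_Ico_eq_integral_Ioo, ← integral_Ioc_eq_integral_Ioo,
    ← intervalIntegral.integral_of_le hab, ← intervalIntegral.integral_comp_sub_right]
  simp only [gaussianPDFReal_sub, zero_add]

theorem concaveOn_log_gaussianReal_Ico (hv : v ≠ 0) (a b : ℝ) :
    ConcaveOn ℝ univ fun μ => log ((gaussianReal μ v).real (Ico a b)) := by
  rcases lt_or_ge a b with hab | hba
  · simp only [gaussianReal_real_Ico hv _ hab.le]
    refine concaveOn_log_integral_sub (g := fun y => y / v) (fun y => ?_)
      (fun x y hxy => div_le_div_of_nonneg_right hxy v.2)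
      (fun y => gaussianPDFReal_pos 0 v y hv) hab
    simpa using hasDerivAt_gaussianPDFReal 0 v y
  · simpa [Ico_eq_empty_of_le hba] using concaveOn_const 0 convex_univ

theorem concaveOn_log_gaussianReal_iUnion (hv : v ≠ 0) {A : ℕ → Set ℝ}
    (hA : Monotone A)
    (hconc : ∀ k, ConcaveOn ℝ univ fun μ => log ((gaussianReal μ v).real (A k))) :
    ConcaveOn ℝ univ fun μ => log ((gaussianReal μ v).real (⋃ k, A k)) := by
  by_cases hnull : volume (⋃ k, A k) = 0
  · -- `log 0 = 0`, so a null set gives the constant function `0`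
    simpa [(gaussianReal_real_eq_zero_iff hv _).2 hnull] using concaveOn_const 0 convex_univ
  refine ConcaveOn.of_tendsto (l := atTop) hconc fun μ _ => ?_
  have hpos : (gaussianReal μ v).real (⋃ k, A k) ≠ 0 :=
    (gaussianReal_real_eq_zero_iff hv μ).not.2 hnull
  exact ((continuousAt_log hpos).tendsto.comp
    ((ENNReal.tendsto_toReal (measure_ne_top _ _)).comp (tendsto_measure_iUnion_atTop hA)))

theorem concaveOn_log_gaussianReal_setOf (hv : v ≠ 0) (l u : EReal) :
    ConcaveOn ℝ univ fun μ => log ((gaussianReal μ v).real {x : ℝ | l ≤ x ∧ (x : EReal) < u}) := by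
  set A := {x : ℝ | l ≤ x ∧ (x : EReal) < u}
  have hA : ⋃ k : ℕ, A ∩ Ico (-k : ℝ) k = A := by
    refine (iUnion_subset fun k => inter_subset_left).antisymm fun x hx => ?_
    obtain ⟨k, hk⟩ := exists_nat_gt |x|
    exact mem_iUnion.2 ⟨k, hx, by linarith [neg_abs_le x], (le_abs_self x).trans_lt hk⟩
  rw [← hA]
  refine concaveOn_log_gaussianReal_iUnion hv (fun i j hij => ?_) fun k => ?_
  · exact inter_subset_inter_right _ (Ico_subset_Ico (by simpa using hij) (by simpa using hij))
  · obtain ⟨a, b, hab⟩ := EReal.exists_Ico_eq_setOf_inter_Ico l u (-k) k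
    rw [hab]
    exact concaveOn_log_gaussianReal_Ico hv a b

end GaussianCell

theorem sum_measureReal_eq_one_of_existsUnique {α S : Type*} [MeasurableSpace α] [Fintype S]
    (ν : Measure α) [IsProbabilityMeasure ν] {A : S → Set α} (hA : ∀ s, MeasurableSet (A s))
    (h : ∀ x, ∃! s, x ∈ A s) : ∑ s, ν.real (A s) = 1 := by
  have hdisj : Pairwise (Function.onFun Disjoint A) := fun s t hst =>
    disjoint_left.2 fun x hs ht => hst ((h x).unique hs ht)
  rw [← measureReal_iUnion_fintype hdisj hA, iUnion_eq_univ_iff.2 fun x => (h x).exists,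
    probReal_univ]

theorem sum_mul_log_le_sum_mul_log {S : Type*} [Fintype S] {c q : S → ℝ} (hc : ∀ s, 0 ≤ c s)
    (hq : ∀ s, 0 ≤ q s) (hcq : ∀ s, c s ≠ 0 → q s ≠ 0) (hsum : ∑ s, q s ≤ ∑ s, c s) :
    ∑ s, c s * log (q s) ≤ ∑ s, c s * log (c s) := by
  have hterm : ∀ s, c s * log (q s) - c s * log (c s) ≤ q s - c s := by
    intro s
    rcases (hc s).eq_or_lt with h | h
    · simp [← h, hq s]
    have hq' := (hq s).lt_of_ne' (hcq s h.ne')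
    calc c s * log (q s) - c s * log (c s) = c s * log (q s / c s) := by
          rw [log_div hq'.ne' h.ne']; ring
      _ ≤ c s * (q s / c s - 1) :=
          mul_le_mul_of_nonneg_left (log_le_sub_one_of_pos (div_pos hq' h)) h.le
      _ = q s - c s := by field_simp
  have htotal := Finset.sum_le_sum fun s (_ : s ∈ Finset.univ) => hterm s
  rw [Finset.sum_sub_distrib, Finset.sum_sub_distrib] at htotal
  linarith

theorem asymptotic_cv_concave_max_general {Ω : Type*} [MeasurableSpace Ω] (P : Measure Ω)
    {n : ℕ} {S : Type*} [Fintype S]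
    (l u : S → EReal)
    (hpart : ∀ x : ℝ, ∃! s : S, l s ≤ (x : EReal) ∧ (x : EReal) < u s)
    (a : Ω → Fin n → ℝ)
    (h₀ : EuclideanSpace ℝ (Fin n))
    (p : ℝ → S → ℝ)
    (hp : ∀ μ s, p μ s =
      ((gaussianReal μ (1 / 2)) {x : ℝ | l s ≤ (x : EReal) ∧ (x : EReal) < u s}).toReal)
    (F : EuclideanSpace ℝ (Fin n) → ℝ)
    (hF : F = fun h => ∫ ω, ∑ s,
      p (∑ j, a ω j * h₀ j) s * Real.log (p (∑ j, a ω j * h j) s) ∂P)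
    (hint : ∀ h : EuclideanSpace ℝ (Fin n), Integrable (fun ω => ∑ s,
      p (∑ j, a ω j * h₀ j) s * Real.log (p (∑ j, a ω j * h j) s)) P) :
    ConcaveOn ℝ Set.univ F ∧ ∀ h, F h ≤ F h₀ := by
  have hv : (1 / 2 : ℝ≥0) ≠ 0 := by norm_num
  set A : S → Set ℝ := fun s => {x : ℝ | l s ≤ (x : EReal) ∧ (x : EReal) < u s}
  have hpA : ∀ μ s, p μ s = (gaussianReal μ (1 / 2)).real (A s) := hp
  have hA : ∀ s, MeasurableSet (A s) := fun s =>
    (measurableSet_le measurable_const measurable_coe_real_ereal).inter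
      (measurableSet_lt measurable_coe_real_ereal measurable_const)
  have hp_nonneg : ∀ μ s, 0 ≤ p μ s := fun μ s => (hpA μ s).symm ▸ measureReal_nonneg
  have hp_sum : ∀ μ, ∑ s, p μ s = 1 := fun μ => by
    simpa only [hpA] using sum_measureReal_eq_one_of_existsUnique _ hA hpart
  have hp_ne_zero : ∀ μ ν s, p μ s ≠ 0 → p ν s ≠ 0 := fun μ ν s => by
    simp only [hpA, ne_eq, gaussianReal_real_eq_zero_iff hv, imp_self]
  have hp_conc : ∀ s, ConcaveOn ℝ univ fun μ => log (p μ s) := fun s => by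
    simpa only [hpA] using concaveOn_log_gaussianReal_setOf hv (l s) (u s)
  subst hF
  refine ⟨ConcaveOn.integral convex_univ (fun ω => ?_) fun h _ => hint h,
    fun h => integral_mono (hint h) (hint h₀) fun ω => ?_⟩
  · let L : EuclideanSpace ℝ (Fin n) →ₗ[ℝ] ℝ :=
      (dotProductBilin ℝ ℝ (a ω)).comp (WithLp.linearEquiv 2 ℝ (Fin n → ℝ)).toLinearMap
    exact ConcaveOn.sum _ convex_univ fun s _ =>
      ((hp_conc s).comp_linearMap L).smul (hp_nonneg _ s)
  · exact sum_mul_log_le_sum_mul_log (fun s => hp_nonneg _ s) (fun s => hp_nonneg _ s)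
      (fun s => hp_ne_zero _ _ s) (by rw [hp_sum, hp_sum])

/-- Lemma 1 of the paper: let `a ∈ ℝⁿ` be a random vector and, for a fixed finite interval
partition `{[ℓ_s, u_s)}_{s ∈ S}` of `ℝ` (with possibly infinite endpoints), let
`p_μ(s) = P(N(μ, 1/2) ∈ [ℓ_s, u_s))` and
`g_a(h) = ∑ s, p_{aᵀh₀}(s) log p_{aᵀh}(s)` be the negative cross entropy of the quantized
Gaussians. Then `f(h) = E_a[g_a(h)]` is concave in `h` and attains its maximum at `h = h₀`. -/
theorem asymptotic_cv_concave_max {Ω : Type*} [MeasurableSpace Ω] (P : Measure Ω)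
    [IsProbabilityMeasure P] {n : ℕ} {S : Type*} [Fintype S]
    (l u : S → EReal)
    (hpart : ∀ x : ℝ, ∃! s : S, l s ≤ (x : EReal) ∧ (x : EReal) < u s)
    (a : Ω → Fin n → ℝ) (hmeas : Measurable a)
    (h₀ : EuclideanSpace ℝ (Fin n))
    (p : ℝ → S → ℝ)
    (hp : ∀ μ s, p μ s =
      ((gaussianReal μ (1 / 2)) {x : ℝ | l s ≤ (x : EReal) ∧ (x : EReal) < u s}).toReal)
    (F : EuclideanSpace ℝ (Fin n) → ℝ)
    (hF : F = fun h => ∫ ω, ∑ s,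
      p (∑ j, a ω j * h₀ j) s * Real.log (p (∑ j, a ω j * h j) s) ∂P)
    (hint : ∀ h : EuclideanSpace ℝ (Fin n), Integrable (fun ω => ∑ s,
      p (∑ j, a ω j * h₀ j) s * Real.log (p (∑ j, a ω j * h j) s)) P) :
    ConcaveOn ℝ Set.univ F ∧ ∀ h, F h ≤ F h₀ :=
  asymptotic_cv_concave_max_general P l u hpart a h₀ p hp F hF hint
end
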